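/- arXiv:2404.15277 — 2 statements merged into one kernel-verified Lean document; each statement's English description precedes it below -/
import Mathlib

section
/- Let plate matrices E₀, E₁, E₂, M and coupling matrices R₁, R₂ be square of size n, let (k, φ) with φ ≠ 0 solve the nonlinear eigenvalue problem (−k²E₀ + ikE₁ − E₂ + ω²M + iκ_{y,1}R₁ + iκ_{y,2}R₂)φ = 0, where κ_{y,j} = √(κⱼ² − k²). Then the tuple (ik, iκ_{y,1}, iκ_{y,2}, ξ₀) with ξ₀ = −k² is an eigenvalue of the four-parameter eigenvalue problem consisting of: (i) (−E₂ + ω²M + ik E₁ + iκ_{y,1}R₁ + iκ_{y,2}R₂ + ξ₀E₀)φ = 0; (ii) ([[0,−κ₁²],[1,0]] + iκ_{y,1}I + ξ₀[[0,−1],[0,0]])x₁ = 0 for some x₁ ≠ 0; (iii) the analogous equation with κ₂, κ_{y,2} and some x₂ ≠ 0; (iv) ([[0,0],[0,1]] + ik[[0,1],[1,0]] + ξ₀[[1,0],[0,0]])x₃ = 0 for some x₃ ≠ 0. -/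
open Matrix Complex

/-!
The plate equation in the four-parameter problem is the nonlinear equation with its terms
reordered. Each auxiliary 2 × 2 equation has a nonzero solution because its matrix is singular:
the determinant of the radiation pencil is `κⱼ² + ξ₀ - κ_{y,j}²` and that of the wavenumber pencil
is `ξ₀ + k²`, both of which vanish when `ξ₀ = -k²` and `κ_{y,j}² = κⱼ² - k²`.
-/

theorem det_radiation_pencil_eq_zero {κ κy ξ : ℂ} (h : κy ^ 2 = κ ^ 2 + ξ) :
    (!![0, -κ ^ 2; 1, 0] + (I * κy) • (1 : Matrix (Fin 2) (Fin 2) ℂ)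
      + ξ • !![0, -1; 0, 0]).det = 0 := by
  simp only [one_fin_two, det_fin_two, Matrix.add_apply, Matrix.smul_apply, of_apply, cons_val',
    cons_val_zero, cons_val_one, cons_val_fin_one, smul_eq_mul]
  linear_combination -h + κy ^ 2 * I_sq

theorem det_wavenumber_pencil_eq_zero (k : ℂ) :
    (!![0, 0; 0, 1] + (I * k) • !![0, 1; 1, 0] + (-k ^ 2) • !![(1:ℂ), 0; 0, 0]).det = 0 := by
  simp only [det_fin_two, Matrix.add_apply, Matrix.smul_apply, of_apply, cons_val',
    cons_val_zero, cons_val_one, cons_val_fin_one, smul_eq_mul]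
  linear_combination -k ^ 2 * I_sq

theorem stmt_12_general (n : ℕ)
    (E₀ E₁ E₂ M R₁ R₂ : Matrix (Fin n) (Fin n) ℂ)
    (ω κ₁ κ₂ k κy₁ κy₂ : ℂ)
    (hκy₁ : κy₁ ^ 2 = κ₁ ^ 2 - k ^ 2)
    (hκy₂ : κy₂ ^ 2 = κ₂ ^ 2 - k ^ 2)
    (φ : Fin n → ℂ)
    (h : ((-k ^ 2) • E₀ + (Complex.I * k) • E₁ - E₂ + (ω ^ 2) • M
          + (Complex.I * κy₁) • R₁ + (Complex.I * κy₂) • R₂).mulVec φ = 0)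
    (ξ₀ : ℂ) (hξ₀ : ξ₀ = -k ^ 2) :
    (-E₂ + (ω ^ 2) • M + (Complex.I * k) • E₁
        + (Complex.I * κy₁) • R₁ + (Complex.I * κy₂) • R₂ + ξ₀ • E₀).mulVec φ = 0 ∧
    (∃ x₁ : Fin 2 → ℂ, x₁ ≠ 0 ∧
      (!![0, -κ₁ ^ 2; 1, 0] + (Complex.I * κy₁) • (1 : Matrix (Fin 2) (Fin 2) ℂ)
        + ξ₀ • !![0, -1; 0, 0]).mulVec x₁ = 0) ∧
    (∃ x₂ : Fin 2 → ℂ, x₂ ≠ 0 ∧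
      (!![0, -κ₂ ^ 2; 1, 0] + (Complex.I * κy₂) • (1 : Matrix (Fin 2) (Fin 2) ℂ)
        + ξ₀ • !![0, -1; 0, 0]).mulVec x₂ = 0) ∧
    (∃ x₃ : Fin 2 → ℂ, x₃ ≠ 0 ∧
      (!![0, 0; 0, 1] + (Complex.I * k) • !![0, 1; 1, 0]
        + ξ₀ • !![(1:ℂ), 0; 0, 0]).mulVec x₃ = 0) := by
  subst hξ₀
  refine ⟨?_, exists_mulVec_eq_zero_iff.mpr (det_radiation_pencil_eq_zero ?_),
    exists_mulVec_eq_zero_iff.mpr (det_radiation_pencil_eq_zero ?_),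
    exists_mulVec_eq_zero_iff.mpr (det_wavenumber_pencil_eq_zero k)⟩
  · rw [← h]
    congr 1
    abel
  · rw [hκy₁, sub_eq_add_neg]
  · rw [hκy₂, sub_eq_add_neg]

/-- Theorem 1 of the paper: a solution of the nonlinear eigenvalue problem of the
fluid-coupled plate yields a solution of the four-parameter eigenvalue problem. -/
theorem stmt_12 (n : ℕ)
    (E₀ E₁ E₂ M R₁ R₂ : Matrix (Fin n) (Fin n) ℂ)
    (ω κ₁ κ₂ k κy₁ κy₂ : ℂ)
    (hκy₁ : κy₁ ^ 2 = κ₁ ^ 2 - k ^ 2)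
    (hκy₂ : κy₂ ^ 2 = κ₂ ^ 2 - k ^ 2)
    (φ : Fin n → ℂ) (hφ : φ ≠ 0)
    (h : ((-k ^ 2) • E₀ + (Complex.I * k) • E₁ - E₂ + (ω ^ 2) • M
          + (Complex.I * κy₁) • R₁ + (Complex.I * κy₂) • R₂).mulVec φ = 0)
    (ξ₀ : ℂ) (hξ₀ : ξ₀ = -k ^ 2) :
    (-E₂ + (ω ^ 2) • M + (Complex.I * k) • E₁
        + (Complex.I * κy₁) • R₁ + (Complex.I * κy₂) • R₂ + ξ₀ • E₀).mulVec φ = 0 ∧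
    (∃ x₁ : Fin 2 → ℂ, x₁ ≠ 0 ∧
      (!![0, -κ₁ ^ 2; 1, 0] + (Complex.I * κy₁) • (1 : Matrix (Fin 2) (Fin 2) ℂ)
        + ξ₀ • !![0, -1; 0, 0]).mulVec x₁ = 0) ∧
    (∃ x₂ : Fin 2 → ℂ, x₂ ≠ 0 ∧
      (!![0, -κ₂ ^ 2; 1, 0] + (Complex.I * κy₂) • (1 : Matrix (Fin 2) (Fin 2) ℂ)
        + ξ₀ • !![0, -1; 0, 0]).mulVec x₂ = 0) ∧
    (∃ x₃ : Fin 2 → ℂ, x₃ ≠ 0 ∧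
      (!![0, 0; 0, 1] + (Complex.I * k) • !![0, 1; 1, 0]
        + ξ₀ • !![(1:ℂ), 0; 0, 0]).mulVec x₃ = 0) :=
  stmt_12_general n E₀ E₁ E₂ M R₁ R₂ ω κ₁ κ₂ k κy₁ κy₂ hκy₁ hκy₂ φ h ξ₀ hξ₀
end

section
/- For a regular r-parameter eigenvalue problem with matrices A_{ij} (A_{ij} of size nᵢ×nᵢ), if (A_{i0} + λ₁A_{i1} + ⋯ + λ_rA_{ir})xᵢ = 0 with xᵢ ≠ 0 for all i, then z = x₁ ⊗ ⋯ ⊗ x_r satisfies Δᵢz = λᵢΔ₀z for each i = 1,…,r, where Δ₀ = Σ_{σ∈S_r} sgn(σ) A_{1σ(1)} ⊗ ⋯ ⊗ A_{rσ(r)} and Δᵢ is obtained from Δ₀ by replacing the i-th column index set {A_{1i},…,A_{ri}} with {−A_{10},…,−A_{r0}} in the Leibniz-type determinant formula. -/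
open Matrix

/-- Kronecker-type product of a family of square matrices, acting on the
product index type. -/
def kronFamily {r : ℕ} {n : Fin r → ℕ}
    (B : (i : Fin r) → Matrix (Fin (n i)) (Fin (n i)) ℂ) :
    Matrix ((i : Fin r) → Fin (n i)) ((i : Fin r) → Fin (n i)) ℂ :=
  fun p q => ∏ i, B i (p i) (q i)

/-- Operator determinant Δ₀ of an r-parameter eigenvalue problem:
generalized Leibniz formula with Kronecker products in place of products.
`A i j` is the matrix A_{i,j}, with `j = 0` the constant term and
`j = l.succ` the coefficient of λ_l. -/
noncomputable def opDet₀ {r : ℕ} {n : Fin r → ℕ}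
    (A : (i : Fin r) → Fin (r + 1) → Matrix (Fin (n i)) (Fin (n i)) ℂ) :
    Matrix ((i : Fin r) → Fin (n i)) ((i : Fin r) → Fin (n i)) ℂ :=
  ∑ σ : Equiv.Perm (Fin r),
    (Equiv.Perm.sign σ : ℤ) • kronFamily (fun i => A i (σ i).succ)

/-- Operator determinant Δ_j : replace column j by the (negated) constant
terms −A_{i,0} in the Leibniz formula. -/
noncomputable def opDet {r : ℕ} {n : Fin r → ℕ}
    (A : (i : Fin r) → Fin (r + 1) → Matrix (Fin (n i)) (Fin (n i)) ℂ)
    (j : Fin r) :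
    Matrix ((i : Fin r) → Fin (n i)) ((i : Fin r) → Fin (n i)) ℂ :=
  -∑ σ : Equiv.Perm (Fin r),
    (Equiv.Perm.sign σ : ℤ) •
      kronFamily (fun i => if σ i = j then A i 0 else A i (σ i).succ)

/-! At a multi-index `p`, pairing with `z = x₁ ⊗ ⋯ ⊗ x_r` turns every Kronecker product into a
product of scalars. Hence `(Δ₀ z) p` is the ordinary determinant of the `r × r` matrix
`N_p = ((A i l.succ *ᵥ x i) (p i))_{i,l}`, and `(Δ_j z) p` is the same determinant with column `j`
replaced by `b = (-(A i 0 *ᵥ x i) (p i))_i`, i.e. the `j`-th Cramer coordinate of `b`.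
The eigenvalue equations say exactly `N_p *ᵥ λ = b`, and Cramer's rule
`cramer N (N *ᵥ v) = det N • v` holds over any commutative ring. -/

namespace Matrix

variable {ι R : Type*} [Fintype ι] [DecidableEq ι] [CommRing R]

theorem cramer_mulVec (M : Matrix ι ι R) (v : ι → R) : M.cramer (M *ᵥ v) = M.det • v := by
  rw [cramer_eq_adjugate_mulVec, mulVec_mulVec, adjugate_mul, smul_mulVec, one_mulVec]

theorem det_eq_sum_sign_smul_prod_apply_perm (M : Matrix ι ι R) :
    M.det = ∑ σ : Equiv.Perm ι, Equiv.Perm.sign σ • ∏ i, M i (σ i) := by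
  rw [← det_transpose, det_apply]
  rfl

end Matrix

section

variable {r : ℕ} {n : Fin r → ℕ}

theorem kronFamily_mulVec_prod (B : (i : Fin r) → Matrix (Fin (n i)) (Fin (n i)) ℂ)
    (x : (i : Fin r) → Fin (n i) → ℂ) :
    kronFamily B *ᵥ (fun q => ∏ i, x i (q i)) = fun p => ∏ i, (B i *ᵥ x i) (p i) := by
  funext p
  simp only [mulVec, dotProduct, kronFamily, ← Finset.prod_mul_distrib]
  exact (Fintype.prod_sum fun i k => B i (p i) k * x i k).symm

theorem sum_sign_smul_kronFamily_mulVec_prod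
    (B : Equiv.Perm (Fin r) → (i : Fin r) → Matrix (Fin (n i)) (Fin (n i)) ℂ)
    (x : (i : Fin r) → Fin (n i) → ℂ) (p : (i : Fin r) → Fin (n i)) :
    ((∑ σ, (Equiv.Perm.sign σ : ℤ) • kronFamily (B σ)) *ᵥ fun q => ∏ i, x i (q i)) p =
      ∑ σ, Equiv.Perm.sign σ • ∏ i, (B σ i *ᵥ x i) (p i) := by
  simp only [sum_mulVec, smul_mulVec, kronFamily_mulVec_prod, Finset.sum_apply, Pi.smul_apply,
    Units.smul_def]

def coeffMatrix (A : (i : Fin r) → Fin (r + 1) → Matrix (Fin (n i)) (Fin (n i)) ℂ)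
    (x : (i : Fin r) → Fin (n i) → ℂ) (p : (i : Fin r) → Fin (n i)) : Matrix (Fin r) (Fin r) ℂ :=
  Matrix.of fun i l => (A i l.succ *ᵥ x i) (p i)

variable (A : (i : Fin r) → Fin (r + 1) → Matrix (Fin (n i)) (Fin (n i)) ℂ)
  (x : (i : Fin r) → Fin (n i) → ℂ) (p : (i : Fin r) → Fin (n i))

theorem opDet₀_mulVec_prod :
    (opDet₀ A *ᵥ fun q => ∏ i, x i (q i)) p = (coeffMatrix A x p).det := by
  rw [opDet₀, sum_sign_smul_kronFamily_mulVec_prod, det_eq_sum_sign_smul_prod_apply_perm]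
  rfl

theorem opDet_mulVec_prod (j : Fin r) :
    (opDet A j *ᵥ fun q => ∏ i, x i (q i)) p =
      (coeffMatrix A x p).cramer (fun i => -(A i 0 *ᵥ x i) (p i)) j := by
  have hneg : (fun i => -(A i 0 *ᵥ x i) (p i)) = (-1 : ℂ) • fun i => (A i 0 *ᵥ x i) (p i) := by
    funext i
    simp
  rw [cramer_apply, hneg, det_updateCol_smul, opDet, neg_mulVec, Pi.neg_apply,
    sum_sign_smul_kronFamily_mulVec_prod, det_eq_sum_sign_smul_prod_apply_perm, neg_one_mul]
  congr 1
  refine Finset.sum_congr rfl fun σ _ => congrArg _ (Finset.prod_congr rfl fun i _ => ?_)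
  rw [updateCol_apply]
  split_ifs <;> rfl

theorem coeffMatrix_mulVec_apply (lam : Fin r → ℂ) (i : Fin r)
    (hi : (A i 0 + ∑ l : Fin r, lam l • A i l.succ) *ᵥ x i = 0) :
    (coeffMatrix A x p *ᵥ lam) i = -(A i 0 *ᵥ x i) (p i) := by
  have hp := congrFun hi (p i)
  simp only [add_mulVec, sum_mulVec, smul_mulVec, Pi.add_apply, Finset.sum_apply, Pi.smul_apply,
    smul_eq_mul, Pi.zero_apply] at hp
  change ∑ l, (A i l.succ *ᵥ x i) (p i) * lam l = _
  simp only [mul_comm _ (lam _)]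
  linear_combination hp

end

theorem stmt_15_general (r : ℕ) (n : Fin r → ℕ)
    (A : (i : Fin r) → Fin (r + 1) → Matrix (Fin (n i)) (Fin (n i)) ℂ)
    (lam : Fin r → ℂ) (x : (i : Fin r) → Fin (n i) → ℂ)
    (h : ∀ i, (A i 0 + ∑ l : Fin r, lam l • A i l.succ).mulVec (x i) = 0)
    (z : ((i : Fin r) → Fin (n i)) → ℂ) (hz : ∀ p, z p = ∏ i, x i (p i)) :
    ∀ j : Fin r, (opDet A j).mulVec z = lam j • (opDet₀ A).mulVec z := by
  intro j
  obtain rfl : z = fun p => ∏ i, x i (p i) := funext hz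
  funext p
  have hsystem : coeffMatrix A x p *ᵥ lam = fun i => -(A i 0 *ᵥ x i) (p i) :=
    funext fun i => coeffMatrix_mulVec_apply A x p lam i (h i)
  rw [opDet_mulVec_prod, ← hsystem, cramer_mulVec, Pi.smul_apply, Pi.smul_apply,
    opDet₀_mulVec_prod, smul_eq_mul, smul_eq_mul, mul_comm]

/-- Atkinson's operator-determinant relation for a regular r-parameter
eigenvalue problem. -/
theorem stmt_15 (r : ℕ) (n : Fin r → ℕ)
    (A : (i : Fin r) → Fin (r + 1) → Matrix (Fin (n i)) (Fin (n i)) ℂ)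
    (hreg : IsUnit (opDet₀ A))
    (lam : Fin r → ℂ) (x : (i : Fin r) → Fin (n i) → ℂ)
    (hx : ∀ i, x i ≠ 0)
    (h : ∀ i, (A i 0 + ∑ l : Fin r, lam l • A i l.succ).mulVec (x i) = 0)
    (z : ((i : Fin r) → Fin (n i)) → ℂ) (hz : ∀ p, z p = ∏ i, x i (p i)) :
    ∀ j : Fin r, (opDet A j).mulVec z = lam j • (opDet₀ A).mulVec z :=
  stmt_15_general r n A lam x h z hz
end
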